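/- Let S_1, …, S_m be integrally convex subsets of ℤ^n with n ≥ 1, and W = S_1 + ⋯ + S_m. For any x ∈ conv(W), there exists z ∈ W with ‖x − z‖_2 ≤ (1/2)·√(n·min(n,m)). -/

import Mathlib

/-!
By Shapley–Folkman, `x = ∑ yᵢ` with `yᵢ ∈ conv Sᵢ` and `yᵢ ∈ Sᵢ` for all but at most `n`
indices. By integral convexity each exceptional `yᵢ` is a convex combination of integer points of
the unit cube around it, all at distance `√n / 2` from the centre `c` of that cube. Round the
exceptional `yᵢ` one at a time, keeping track of the accumulated error `e`: since
`p ↦ ‖e + (yᵢ - p)‖² - ‖p - c‖²` is affine, some admissible `p` makes it at most its value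
`‖e‖² - ‖yᵢ - c‖²` at `p = yᵢ`, so each step increases `‖e‖²` by at most `n / 4`.
-/

open scoped BigOperators Pointwise

noncomputable section

/-- Coercion of an integer vector to a real vector (sup-norm space). -/
def coeZR {n : ℕ} (v : Fin n → ℤ) : Fin n → ℝ := fun i => (v i : ℝ)

/-- Minkowski sum of a finite family of subsets of ℝ^n. -/
def minkSum {n m : ℕ} (S : Fin m → Set (Fin n → ℝ)) : Set (Fin n → ℝ) :=
  {x | ∃ z : Fin m → (Fin n → ℝ), (∀ i, z i ∈ S i) ∧ x = ∑ i, z i}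

/-- Minkowski sum of a finite family of subsets of ℤ^n. -/
def minkSumZ {n m : ℕ} (S : Fin m → Set (Fin n → ℤ)) : Set (Fin n → ℤ) :=
  {x | ∃ z : Fin m → (Fin n → ℤ), (∀ i, z i ∈ S i) ∧ x = ∑ i, z i}

/-- Integral neighborhood N(x) of a real vector x. -/
def intNbhd {n : ℕ} (x : Fin n → ℝ) : Set (Fin n → ℤ) :=
  {z | ∀ i, |x i - (z i : ℝ)| < 1}

/-- Integral convexity of a set S ⊆ ℤ^n. -/
def IntegrallyConvex {n : ℕ} (S : Set (Fin n → ℤ)) : Prop :=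
  S.Nonempty ∧ ∀ x ∈ convexHull ℝ (coeZR '' S),
    x ∈ convexHull ℝ (coeZR '' (S ∩ intNbhd x))

/-- Coercion of an integer vector into Euclidean space (ℓ² norm). -/
def coeZE {n : ℕ} (v : Fin n → ℤ) : EuclideanSpace ℝ (Fin n) := WithLp.toLp 2 (fun i => (v i : ℝ))

open Finset Module

theorem AffineIndependent.linearIndependent_of_map_eq_one {k V ι : Type*} [Ring k]
    [AddCommGroup V] [Module k V] {p : ι → V} (hp : AffineIndependent k p) (φ : V →ₗ[k] k)
    (hφ : ∀ i, φ (p i) = 1) : LinearIndependent k p :=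
  linearIndependent_iff'.2 fun s g hg => hp.eq_zero_of_sum_eq_zero
    (by simpa [hφ] using congr_arg φ hg) hg

theorem card_add_card_filter_one_lt_card_fiber_le {κ ι : Type*} [Fintype κ] [Fintype ι]
    [DecidableEq ι] {f : κ → ι} (hf : Function.Surjective f) :
    Fintype.card ι + #{i | 1 < #{j | f j = i}} ≤ Fintype.card κ := by
  rw [card_filter, ← card_univ, card_eq_sum_ones, ← sum_add_distrib, ← card_univ (α := κ),
    card_eq_sum_card_fiberwise (s := univ) (t := univ) (f := f) fun _ _ => mem_univ _]
  refine sum_le_sum fun i _ => ?_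
  obtain ⟨j, rfl⟩ := hf i
  have : 0 < #{j' | f j' = f j} := card_pos.2 ⟨j, by simp⟩
  split_ifs <;> omega

theorem card_le_finrank_add_card_of_affineIndependent {k V ι κ : Type*} [Field k]
    [AddCommGroup V] [Module k V] [FiniteDimensional k V] [Fintype ι] [Fintype κ]
    {z : κ → V × (ι → k)} (hz : AffineIndependent k z) (hsum : ∀ j, ∑ i, (z j).2 i = 1) :
    Fintype.card κ ≤ finrank k V + Fintype.card ι := by
  let φ : V × (ι → k) →ₗ[k] k := (∑ i, LinearMap.proj i) ∘ₗ LinearMap.snd k V (ι → k)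
  have hli := hz.linearIndependent_of_map_eq_one φ fun j => by simpa [φ] using hsum j
  simpa using hli.fintype_card_le_finrank

section ShapleyFolkman

variable {V : Type*} [AddCommGroup V] [Module ℝ V]

theorem sum_smul_mem_convexHull_iUnion_prod_single {ι : Type*} [Fintype ι] [Nonempty ι]
    [DecidableEq ι] {T : ι → Set V} {x : ι → V} (hx : ∀ i, x i ∈ convexHull ℝ (T i)) :
    ∑ i, (Fintype.card ι : ℝ)⁻¹ • (x i, Pi.single i 1) ∈
      convexHull ℝ (⋃ i, T i ×ˢ {(Pi.single i 1 : ι → ℝ)}) := by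
  refine (convex_convexHull ℝ _).sum_mem (fun _ _ => by positivity) (by simp) fun i _ => ?_
  exact convexHull_mono (Set.subset_iUnion (fun i => T i ×ˢ {(Pi.single i 1 : ι → ℝ)}) i)
    (mk_mem_convexHull_prod (hx i) (subset_convexHull ℝ _ rfl))

theorem shapley_folkman [FiniteDimensional ℝ V] {ι : Type*} [Fintype ι] {T : ι → Set V}
    {x : ι → V} (hx : ∀ i, x i ∈ convexHull ℝ (T i)) :
    ∃ y : ι → V, (∀ i, y i ∈ convexHull ℝ (T i)) ∧ ∑ i, y i = ∑ i, x i ∧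
      ∃ B : Finset ι, #B ≤ finrank ℝ V ∧ ∀ i ∉ B, y i ∈ T i := by
  classical
  rcases isEmpty_or_nonempty ι with hι | hι
  · exact ⟨x, hx, rfl, ∅, by simp, fun i => isEmptyElim i⟩
  -- Carathéodory for the lifts `(v, eᵢ)` of `v ∈ T i`: they lie on the hyperplane `∑ⱼ sⱼ = 1`,
  -- so affinely independent lifts are linearly independent, and every index carries one.
  have hX := sum_smul_mem_convexHull_iUnion_prod_single hx
  obtain ⟨κ, _, z, w, hzL, hind, hw0, -, hwz⟩ := eq_pos_convex_span_of_mem_convexHull hX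
  set c : ℝ := (Fintype.card ι : ℝ)
  have hc : 0 < c := Nat.cast_pos.2 Fintype.card_pos
  have hzi : ∀ j, ∃ i, (z j).1 ∈ T i ∧ (z j).2 = Pi.single i 1 := fun j => by
    simpa using hzL ⟨j, rfl⟩
  choose idx hzT hz2 using hzi
  have hfiber : ∀ i, ∑ j ∈ {j | idx j = i}, w j = c⁻¹ := fun i => by
    simpa [Prod.snd_sum, hz2, Pi.single_apply, sum_ite, eq_comm] using congr_arg (·.2 i) hwz
  have hidx : Function.Surjective idx := fun i => by
    by_contra! h
    exact hc.ne (by simpa [h] using hfiber i)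
  let y i := ({j | idx j = i} : Finset κ).centerMass w (fun j => (z j).1)
  refine ⟨y, fun i => ?_, ?_, ({i | 1 < #{j | idx j = i}} : Finset ι), ?_, fun i hi => ?_⟩
  · refine centerMass_mem_convexHull _ (fun j _ => (hw0 j).le) (by rw [hfiber]; positivity)
      fun j hj => ?_
    rw [(mem_filter.1 hj).2.symm]
    exact hzT j
  · have h1 : ∑ j, w j • (z j).1 = c⁻¹ • ∑ i, x i := by
      simpa [Prod.fst_sum, smul_sum] using congr_arg Prod.fst hwz
    calc ∑ i, y i = c • ∑ j, w j • (z j).1 := by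
          rw [← sum_fiberwise univ idx, smul_sum]
          simp [y, centerMass, hfiber]
      _ = ∑ i, x i := by rw [h1, smul_smul, mul_inv_cancel₀ hc.ne', one_smul]
  · have := card_add_card_filter_one_lt_card_fiber_le hidx
    have := card_le_finrank_add_card_of_affineIndependent hind fun j => by simp [hz2]
    omega
  · obtain ⟨j₀, hj₀⟩ := hidx i
    have hpos : 0 < #({j | idx j = i} : Finset κ) := card_pos.2 ⟨j₀, by simpa using hj₀⟩
    obtain ⟨j, hj⟩ : ∃ j, ({j | idx j = i} : Finset κ) = {j} :=
      card_eq_one.1 (by simp only [mem_filter, mem_univ, true_and] at hi; omega)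
    have : idx j = i := by simpa using hj.ge (mem_singleton_self j)
    simp only [y, hj, centerMass_singleton _ _ (hw0 j).ne']
    exact this ▸ hzT j

end ShapleyFolkman

section Rounding

variable {E : Type*} [NormedAddCommGroup E] [InnerProductSpace ℝ E]

theorem exists_norm_add_sub_sq_le_of_mem_convexHull {P : Set E} {y c : E} {R : ℝ}
    (hy : y ∈ convexHull ℝ P) (hP : ∀ p ∈ P, ‖p - c‖ ^ 2 ≤ R) (e : E) :
    ∃ p ∈ P, ‖e + (y - p)‖ ^ 2 ≤ ‖e‖ ^ 2 + R := by
  set u := e + (y - c)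
  obtain ⟨p, hpP, hp⟩ := ((innerₛₗ ℝ u).convexOn convex_univ).exists_ge_of_mem_convexHull
    (Set.subset_univ P) hy
  refine ⟨p, hpP, ?_⟩
  have h1 : e + (y - p) = u - (p - c) := by simp only [u]; abel
  have h2 : e = u - (y - c) := by simp only [u]; abel
  have h3 : inner ℝ u (y - c) ≤ inner ℝ u (p - c) := by
    simp only [inner_sub_right]; simpa using hp
  have h4 : ‖e‖ ^ 2 = ‖u‖ ^ 2 - 2 * inner ℝ u (y - c) + ‖y - c‖ ^ 2 := by
    rw [h2, norm_sub_sq_real]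
  rw [h1, norm_sub_sq_real]
  linarith [hP p hpP, sq_nonneg ‖y - c‖]

theorem exists_norm_sum_sub_sq_le {ι : Type*} [Fintype ι] {P : ι → Set E} {y c : ι → E} {R : ℝ}
    (s : Finset ι) (hy : ∀ i ∈ s, y i ∈ convexHull ℝ (P i))
    (hP : ∀ i ∈ s, ∀ p ∈ P i, ‖p - c i‖ ^ 2 ≤ R) :
    ∃ p : ι → E, (∀ i ∈ s, p i ∈ P i) ∧ (∀ i ∉ s, p i = y i) ∧
      ‖∑ i, (y i - p i)‖ ^ 2 ≤ #s * R := by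
  classical
  induction s using Finset.induction_on with
  | empty => exact ⟨y, by simp, fun _ _ => rfl, by simp⟩
  | @insert a s ha ih =>
    obtain ⟨p, hpP, hpy, hp⟩ := ih (fun i hi => hy i (mem_insert_of_mem hi))
      (fun i hi => hP i (mem_insert_of_mem hi))
    obtain ⟨q, hqP, hq⟩ := exists_norm_add_sub_sq_le_of_mem_convexHull
      (hy a (mem_insert_self a s)) (hP a (mem_insert_self a s)) (∑ i, (y i - p i))
    refine ⟨Function.update p a q, fun i hi => ?_, fun i hi => ?_, ?_⟩
    · rcases mem_insert.1 hi with rfl | hi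
      · simpa
      · rw [Function.update_of_ne (ne_of_mem_of_not_mem hi ha)]
        exact hpP i hi
    · rw [Function.update_of_ne (by rintro rfl; exact hi (mem_insert_self _ _))]
      exact hpy i (fun h => hi (mem_insert_of_mem h))
    · have hsum : ∑ i, (y i - Function.update p a q i) = ∑ i, (y i - p i) + (y a - q) := by
        rw [← sub_eq_iff_eq_add', ← sum_sub_distrib, sum_eq_single a]
        · simp [hpy a ha]
        · intro i _ hia
          simp [Function.update_of_ne hia]
        · simp
      rw [hsum, card_insert_of_notMem ha]
      push_cast
      linarith

end Rounding

section IntegerPoints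

variable {n m : ℕ}

theorem floor_le_and_le_floor_add_one_of_mem_intNbhd {x : Fin n → ℝ} {z : Fin n → ℤ}
    (hz : z ∈ intNbhd x) (j : Fin n) : ⌊x j⌋ ≤ z j ∧ z j ≤ ⌊x j⌋ + 1 := by
  obtain ⟨h1, h2⟩ := abs_lt.1 (hz j)
  constructor
  · rw [← Int.lt_add_one_iff, ← Int.cast_lt (R := ℝ)]
    push_cast
    linarith [Int.floor_le (x j)]
  · rw [← Int.lt_add_one_iff, ← Int.cast_lt (R := ℝ)]
    push_cast
    linarith [Int.lt_floor_add_one (x j)]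

theorem norm_coeZE_sub_sq_le_of_mem_intNbhd {x : Fin n → ℝ} {z : Fin n → ℤ}
    (hz : z ∈ intNbhd x) :
    ‖coeZE z - WithLp.toLp 2 (fun j => (⌊x j⌋ : ℝ) + 1 / 2)‖ ^ 2 ≤ n / 4 := by
  rw [EuclideanSpace.norm_sq_eq]
  calc ∑ j, ‖(coeZE z - WithLp.toLp 2 (fun j => (⌊x j⌋ : ℝ) + 1 / 2)) j‖ ^ 2
      ≤ ∑ _j : Fin n, (1 / 4 : ℝ) := sum_le_sum fun j _ => by
        obtain ⟨h1, h2⟩ := floor_le_and_le_floor_add_one_of_mem_intNbhd hz j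
        have h1' : (⌊x j⌋ : ℝ) ≤ z j := by exact_mod_cast h1
        have h2' : (z j : ℝ) ≤ ⌊x j⌋ + 1 := by exact_mod_cast h2
        simp only [coeZE, PiLp.sub_apply, Real.norm_eq_abs, sq_abs]
        nlinarith
    _ = n / 4 := by simp only [sum_const, card_univ, Fintype.card_fin, nsmul_eq_mul]; ring

theorem mem_convexHull_image_coeZE_iff {A : Set (Fin n → ℤ)} {y : EuclideanSpace ℝ (Fin n)} :
    y ∈ convexHull ℝ (coeZE '' A) ↔ y.ofLp ∈ convexHull ℝ (coeZR '' A) := by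
  let e := WithLp.linearEquiv 2 ℝ (Fin n → ℝ)
  have h : coeZR '' A = e '' (coeZE '' A) := by
    rw [Set.image_image]; rfl
  rw [h, ← LinearEquiv.coe_coe, ← LinearMap.image_convexHull, LinearEquiv.coe_coe]
  exact e.injective.mem_set_image.symm

theorem IntegrallyConvex.mem_convexHull_inter_intNbhd {S : Set (Fin n → ℤ)}
    (hS : IntegrallyConvex S) {y : EuclideanSpace ℝ (Fin n)} (hy : y ∈ convexHull ℝ (coeZE '' S)) :
    y ∈ convexHull ℝ (coeZE '' (S ∩ intNbhd y.ofLp)) :=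
  mem_convexHull_image_coeZE_iff.2 (hS.2 _ (mem_convexHull_image_coeZE_iff.1 hy))

theorem coeZE_sum {ι : Type*} (s : Finset ι) (f : ι → Fin n → ℤ) :
    coeZE (∑ i ∈ s, f i) = ∑ i ∈ s, coeZE (f i) := by
  ext j
  simp [coeZE]

theorem image_coeZE_minkSumZ (S : Fin m → Set (Fin n → ℤ)) :
    coeZE '' minkSumZ S = ∑ i, coeZE '' S i := by
  ext v
  simp only [minkSumZ, Set.mem_fintype_sum, Set.mem_image, Set.mem_ofPred_eq]
  constructor
  · rintro ⟨_, ⟨z, hz, rfl⟩, rfl⟩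
    exact ⟨fun i => coeZE (z i), fun i => ⟨z i, hz i, rfl⟩, (coeZE_sum _ z).symm⟩
  · rintro ⟨g, hg, rfl⟩
    choose z hz hzg using hg
    exact ⟨∑ i, z i, ⟨z, hz, rfl⟩, by rw [coeZE_sum]; simp [hzg]⟩

end IntegerPoints

theorem stmt11_general {n m : ℕ}
    (S : Fin m → Set (Fin n → ℤ)) (hS : ∀ i, IntegrallyConvex (S i))
    (x : EuclideanSpace ℝ (Fin n)) (hx : x ∈ convexHull ℝ (coeZE '' minkSumZ S)) :
    ∃ z ∈ minkSumZ S, ‖x - coeZE z‖ ≤ (1 / 2) * Real.sqrt (n * min n m) := by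
  rw [image_coeZE_minkSumZ, convexHull_sum, Set.mem_fintype_sum] at hx
  obtain ⟨xs, hxs, rfl⟩ := hx
  obtain ⟨y, hy, hyxs, B, hBn, hyB⟩ := shapley_folkman hxs
  obtain ⟨p, hpB, hpy, hp⟩ := exists_norm_sum_sub_sq_le (R := n / 4)
    (P := fun i => coeZE '' (S i ∩ intNbhd (y i).ofLp))
    (c := fun i => WithLp.toLp 2 fun j => (⌊y i j⌋ : ℝ) + 1 / 2) B
    (fun i _ => (hS i).mem_convexHull_inter_intNbhd (hy i))
    (fun i _ => by rintro _ ⟨z, hz, rfl⟩; exact norm_coeZE_sub_sq_le_of_mem_intNbhd hz.2)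
  have hu : ∀ i, ∃ u ∈ S i, coeZE u = p i := fun i => by
    by_cases hi : i ∈ B
    · obtain ⟨u, hu, hup⟩ := hpB i hi
      exact ⟨u, hu.1, hup⟩
    · simpa [hpy i hi] using hyB i hi
  choose u hu hup using hu
  refine ⟨∑ i, u i, ⟨u, hu, rfl⟩, ?_⟩
  rw [← hyxs, coeZE_sum, ← sum_sub_distrib]
  simp only [hup]
  rw [finrank_euclideanSpace_fin] at hBn
  have hBm : #B ≤ m := (card_le_univ B).trans (Fintype.card_fin m).le
  have hB : (#B : ℝ) ≤ (min n m : ℕ) := by exact_mod_cast le_min hBn hBm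
  refine (pow_le_pow_iff_left₀ (norm_nonneg _) (by positivity) two_ne_zero).1 (hp.trans ?_)
  rw [mul_pow, Real.sq_sqrt (by positivity)]
  nlinarith [(Nat.cast_nonneg n : (0 : ℝ) ≤ n)]

/-- Shapley–Folkman-type theorem for integrally convex sets (ℓ² bound). -/
theorem stmt11 {n m : ℕ} (hn : 1 ≤ n) (hm : 1 ≤ m)
    (S : Fin m → Set (Fin n → ℤ)) (hS : ∀ i, IntegrallyConvex (S i))
    (x : EuclideanSpace ℝ (Fin n)) (hx : x ∈ convexHull ℝ (coeZE '' minkSumZ S)) :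
    ∃ z ∈ minkSumZ S, ‖x - coeZE z‖ ≤ (1 / 2) * Real.sqrt (n * min n m) :=
  stmt11_general S hS x hx
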